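/- arXiv:2105.09677 — 2 statements merged into one kernel-verified Lean document; each statement's English description precedes it below -/
import Mathlib

section
/- Let (E,ℰ) be a measurable space and let (P_μ)_{μ∈𝒫(E)} be a nonlinear Markov chain satisfying conditions (C1), (C2) and (C3). Then there exists a unique invariant measure π ∈ 𝒫(E) (i.e. π P_π = π), and for every initial distribution μ₀ ∈ 𝒫(E) the marginal distributions μ_n satisfy ‖μ_n − π‖_TV ≤ ‖μ₀ − π‖_TV · (1 − α₂ + λ₂)^{⌊n/2⌋} · c_n for all n ∈ ℤ₊, where c_n = 1 + λ₁ if n is odd and c_n = 1 if n is even. -/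
/-!
Splitting two probability measures into their common part and two mutually singular remainders
of mass `d / 2`, where `d = ‖μ - ν‖_TV`, shows that one kernel step satisfies
`‖μK - νK'‖_TV ≤ d β + (2 - d) γ` whenever `‖K x - K' y‖_TV ≤ 2β` for all `x, y` and
`‖K x - K' x‖_TV ≤ 2γ` for all `x`. By (C1) and (C2), the two-step map `T μ = (μ P_μ) P_{μ P_μ}`
therefore moves measures at distance `d` to distance at most `d (1 - α₂) + (2 - d) λ₂ d / 2`.
This is `< d` for `d > 0`, but it need not be a uniform contraction (its slope at `0` is `1` when
`λ₂ = α₂`), so the fixed point comes from a Boyd–Wong type argument: the tail diameters of the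
orbit of `T` decrease to a fixed point of the bound, hence to `0`, and the orbit converges by
completeness of probability measures under total variation. The fixed point `π` of `T` is unique,
and `T` also fixes `π P_π`, so `π` is invariant. The rate comes from the linear bounds
`(1 - α₂ + λ₂) d` for two steps and `(1 + λ₁) d` for one step (C3).
-/

open MeasureTheory ProbabilityTheory

/-- Total variation distance `‖μ − ν‖_TV = 2 sup_{A ∈ ℰ} |μ(A) − ν(A)|`. -/
noncomputable def tvDist {E : Type*} [MeasurableSpace E] (μ ν : Measure E) : ℝ :=
  2 * ⨆ A : {s : Set E // MeasurableSet s}, |(μ A).toReal - (ν A).toReal|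

/-- One step of the nonlinear chain: `μ ↦ μ P_μ`, `(νP_μ)(B) = ∫ P_μ(x,B) ν(dx)`. -/
noncomputable def stepMeasure {E : Type*} [MeasurableSpace E]
    (P : Measure E → Kernel E E) (μ : Measure E) : Measure E :=
  μ.bind (fun x => P μ x)

/-- Two-step transition kernel `Q_μ(x,B) = ∫ P_μ(x,dy) P_{μP_μ}(y,B)`. -/
noncomputable def twoStepKernel {E : Type*} [MeasurableSpace E]
    (P : Measure E → Kernel E E) (μ : Measure E) (x : E) : Measure E :=
  (P μ x).bind (fun y => P (stepMeasure P μ) y)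

/-- Marginal distributions `μ_{n+1} = μ_n P_{μ_n}` of the nonlinear Markov chain. -/
noncomputable def marginal {E : Type*} [MeasurableSpace E]
    (P : Measure E → Kernel E E) (μ0 : Measure E) : ℕ → Measure E
  | 0 => μ0
  | n + 1 => stepMeasure P (marginal P μ0 n)

open Set Filter Topology
open scoped ENNReal Function

section TotalVariation

variable {E : Type*} [MeasurableSpace E] {μ ν ρ : Measure E}

lemma tvDist_eq_two_mul_iSup_measureReal (μ ν : Measure E) :
    tvDist μ ν = 2 * ⨆ A : {s : Set E // MeasurableSet s}, |μ.real A - ν.real A| := rfl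

lemma tvDist_comm (μ ν : Measure E) : tvDist μ ν = tvDist ν μ := by
  simp only [tvDist_eq_two_mul_iSup_measureReal, abs_sub_comm]

lemma tvDist_self (μ : Measure E) : tvDist μ μ = 0 := by
  simp [tvDist_eq_two_mul_iSup_measureReal]

lemma tvDist_nonneg (μ ν : Measure E) : 0 ≤ tvDist μ ν :=
  mul_nonneg zero_le_two (Real.iSup_nonneg fun _ ↦ abs_nonneg _)

lemma tvDist_le_of_forall_abs_le {c : ℝ}
    (h : ∀ A, MeasurableSet A → |μ.real A - ν.real A| ≤ c) : tvDist μ ν ≤ 2 * c := by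
  have : Nonempty {s : Set E // MeasurableSet s} := ⟨⟨∅, .empty⟩⟩
  rw [tvDist_eq_two_mul_iSup_measureReal]
  gcongr
  exact ciSup_le fun A ↦ h A A.2

lemma abs_measureReal_sub_le_tvDist [IsFiniteMeasure μ] [IsFiniteMeasure ν] {A : Set E}
    (hA : MeasurableSet A) : |μ.real A - ν.real A| ≤ tvDist μ ν / 2 := by
  have hbdd : BddAbove (range fun B : {s : Set E // MeasurableSet s} ↦ |μ.real B - ν.real B|) := by
    refine ⟨μ.real univ + ν.real univ, ?_⟩
    rintro _ ⟨B, rfl⟩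
    have hμ := measureReal_mono (μ := μ) (subset_univ (B : Set E))
    have hν := measureReal_mono (μ := ν) (subset_univ (B : Set E))
    rw [abs_le]
    constructor <;> linarith [measureReal_nonneg (μ := μ) (s := B),
      measureReal_nonneg (μ := ν) (s := B)]
  rw [tvDist_eq_two_mul_iSup_measureReal]
  linarith [le_ciSup hbdd ⟨A, hA⟩]

lemma tvDist_le_two [IsProbabilityMeasure μ] [IsProbabilityMeasure ν] : tvDist μ ν ≤ 2 := by
  have h := tvDist_le_of_forall_abs_le (μ := μ) (ν := ν) (c := 1) fun A _ ↦
    abs_sub_le_of_nonneg_of_le measureReal_nonneg measureReal_le_one measureReal_nonneg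
      measureReal_le_one
  linarith

lemma tvDist_triangle [IsFiniteMeasure μ] [IsFiniteMeasure ν] [IsFiniteMeasure ρ] :
    tvDist μ ρ ≤ tvDist μ ν + tvDist ν ρ := by
  have h := tvDist_le_of_forall_abs_le (μ := μ) (ν := ρ) (c := tvDist μ ν / 2 + tvDist ν ρ / 2)
    fun A hA ↦ (abs_sub_le _ _ _).trans (add_le_add (abs_measureReal_sub_le_tvDist hA)
      (abs_measureReal_sub_le_tvDist hA))
  linarith

lemma eq_of_tvDist_le_zero [IsFiniteMeasure μ] [IsFiniteMeasure ν] (h : tvDist μ ν ≤ 0) :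
    μ = ν := by
  ext A hA
  have : |μ.real A - ν.real A| ≤ 0 := by
    linarith [abs_measureReal_sub_le_tvDist (μ := μ) (ν := ν) hA]
  rw [← measureReal_eq_measureReal_iff]
  linarith [abs_nonpos_iff.mp this]

lemma measure_le_add_ofReal_of_tvDist_le [IsFiniteMeasure μ] [IsFiniteMeasure ν] {c : ℝ}
    (h : tvDist μ ν ≤ 2 * c) {A : Set E} (hA : MeasurableSet A) :
    μ A ≤ ν A + ENNReal.ofReal c := by
  have : μ.real A ≤ ν.real A + c := by
    linarith [le_abs_self (μ.real A - ν.real A), abs_measureReal_sub_le_tvDist (μ := μ) (ν := ν) hA]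
  rw [← ofReal_measureReal (μ := μ), ← ofReal_measureReal (μ := ν)]
  exact (ENNReal.ofReal_le_ofReal this).trans (ENNReal.ofReal_add_le)

end TotalVariation

section Coupling

variable {E : Type*} [MeasurableSpace E]

lemma exists_eq_add_eq_add_mutuallySingular (μ ν : Measure E) [IsFiniteMeasure μ]
    [IsFiniteMeasure ν] : ∃ (m σ σ' : Measure E) (s : Set E), MeasurableSet s ∧
      μ = m + σ ∧ ν = m + σ' ∧ σ sᶜ = 0 ∧ σ' s = 0 := by
  obtain ⟨s, hs, hνμ, hμν⟩ := hahn_decomposition μ ν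
  have hle : ν.restrict s ≤ μ.restrict s := Measure.le_iff.mpr fun u hu ↦ by
    rw [Measure.restrict_apply hu, Measure.restrict_apply hu]
    exact hνμ _ (hu.inter hs) inter_subset_right
  have hle' : μ.restrict sᶜ ≤ ν.restrict sᶜ := Measure.le_iff.mpr fun u hu ↦ by
    rw [Measure.restrict_apply hu, Measure.restrict_apply hu]
    exact hμν _ (hu.inter hs.compl) inter_subset_right
  refine ⟨μ.restrict sᶜ + ν.restrict s, μ.restrict s - ν.restrict s,
    ν.restrict sᶜ - μ.restrict sᶜ, s, hs, ?_, ?_, ?_, ?_⟩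
  · conv_lhs => rw [← Measure.restrict_add_restrict_compl (μ := μ) hs,
      ← Measure.sub_add_cancel_of_le hle]
    ac_rfl
  · conv_lhs => rw [← Measure.restrict_add_restrict_compl (μ := ν) hs,
      ← Measure.sub_add_cancel_of_le hle']
    ac_rfl
  · refine le_antisymm ((Measure.le_iff'.mp Measure.sub_le sᶜ).trans ?_) zero_le
    simp [Measure.restrict_apply' hs]
  · refine le_antisymm ((Measure.le_iff'.mp Measure.sub_le s).trans ?_) zero_le
    simp [Measure.restrict_apply' hs.compl]

lemma exists_common_part (μ ν : Measure E) [IsProbabilityMeasure μ] [IsProbabilityMeasure ν] :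
    ∃ m σ σ' : Measure E, IsFiniteMeasure m ∧ IsFiniteMeasure σ ∧ IsFiniteMeasure σ' ∧
      μ = m + σ ∧ ν = m + σ' ∧ σ univ = σ' univ ∧ tvDist μ ν = 2 * σ.real univ := by
  obtain ⟨m, σ, σ', s, hs, hμ, hν, hσ, hσ'⟩ := exists_eq_add_eq_add_mutuallySingular μ ν
  have : IsFiniteMeasure m := isFiniteMeasure_of_le μ (hμ ▸ Measure.le_add_right le_rfl)
  have : IsFiniteMeasure σ := isFiniteMeasure_of_le μ (hμ ▸ Measure.le_add_left le_rfl)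
  have : IsFiniteMeasure σ' := isFiniteMeasure_of_le ν (hν ▸ Measure.le_add_left le_rfl)
  have hmass : σ univ = σ' univ := by
    have h : m univ + σ univ = m univ + σ' univ := by
      rw [← Measure.add_apply, ← Measure.add_apply, ← hμ, ← hν, measure_univ, measure_univ]
    exact (ENNReal.add_right_inj (measure_ne_top m univ)).mp h
  have hdiff : ∀ A, μ.real A - ν.real A = σ.real A - σ'.real A := fun A ↦ by
    rw [hμ, hν, measureReal_add_apply, measureReal_add_apply]
    ring
  have hσs : σ.real s = σ.real univ := by
    rw [measureReal_def, measureReal_def, ← measure_add_measure_compl hs, hσ, add_zero]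
  refine ⟨m, σ, σ', ‹_›, ‹_›, ‹_›, hμ, hν, hmass, le_antisymm ?_ ?_⟩
  · refine tvDist_le_of_forall_abs_le fun A _ ↦ ?_
    rw [hdiff]
    refine abs_sub_le_of_nonneg_of_le measureReal_nonneg (measureReal_mono (subset_univ A))
      measureReal_nonneg ?_
    rw [measureReal_def, measureReal_def, hmass]
    exact ENNReal.toReal_mono (measure_ne_top _ _) (measure_mono (subset_univ A))
  · have h := abs_measureReal_sub_le_tvDist (μ := μ) (ν := ν) hs
    rw [hdiff, hσs, measureReal_def σ' s, hσ', ENNReal.toReal_zero, sub_zero,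
      abs_of_nonneg measureReal_nonneg] at h
    linarith

lemma lintegral_le_lintegral_add_of_forall_le_add {σ σ' : Measure E} (hσ : σ univ ≤ σ' univ)
    {f g : E → ℝ≥0∞} {β : ℝ≥0∞} (h : ∀ x y, f x ≤ g y + β) :
    ∫⁻ x, f x ∂σ ≤ ∫⁻ y, g y ∂σ' + β * σ univ := by
  set c := ⨅ y, g y
  have hf : ∀ x, f x ≤ c + β := fun x ↦
    tsub_le_iff_right.mp (le_iInf fun y ↦ tsub_le_iff_right.mpr (h x y))
  calc ∫⁻ x, f x ∂σ ≤ ∫⁻ _, c + β ∂σ := lintegral_mono hf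
    _ = c * σ univ + β * σ univ := by rw [lintegral_const, add_mul]
    _ ≤ c * σ' univ + β * σ univ := by gcongr
    _ = ∫⁻ _, c ∂σ' + β * σ univ := by rw [lintegral_const]
    _ ≤ ∫⁻ y, g y ∂σ' + β * σ univ := by gcongr with y; exact iInf_le g y

lemma bind_add_apply_le {m σ σ' : Measure E} (hσ : σ univ ≤ σ' univ) {K K' : Kernel E E}
    {A : Set E} (hA : MeasurableSet A) {β γ : ℝ≥0∞} (hβ : ∀ x y, K x A ≤ K' y A + β)
    (hγ : ∀ x, K x A ≤ K' x A + γ) :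
    (K ∘ₘ (m + σ)) A ≤ (K' ∘ₘ (m + σ')) A + (β * σ univ + γ * m univ) := by
  rw [Measure.bind_apply hA K.aemeasurable, Measure.bind_apply hA K'.aemeasurable,
    lintegral_add_measure, lintegral_add_measure]
  have hm : ∫⁻ x, K x A ∂m ≤ ∫⁻ x, K' x A ∂m + γ * m univ :=
    calc ∫⁻ x, K x A ∂m ≤ ∫⁻ x, K' x A + γ ∂m := lintegral_mono hγ
      _ = ∫⁻ x, K' x A ∂m + γ * m univ := by
        rw [lintegral_add_right _ measurable_const, lintegral_const]
  calc _ ≤ (∫⁻ x, K' x A ∂m + γ * m univ) + (∫⁻ y, K' y A ∂σ' + β * σ univ) :=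
        add_le_add hm (lintegral_le_lintegral_add_of_forall_le_add hσ hβ)
    _ = _ := by ring

lemma measureReal_bind_add_le {m σ σ' : Measure E} [IsFiniteMeasure m] [IsFiniteMeasure σ]
    [IsFiniteMeasure σ'] (hσ : σ univ ≤ σ' univ) {K K' : Kernel E E} [IsFiniteKernel K]
    [IsFiniteKernel K'] {β γ : ℝ} (hβ0 : 0 ≤ β) (hγ0 : 0 ≤ γ)
    (hβ : ∀ x y, tvDist (K x) (K' y) ≤ 2 * β) (hγ : ∀ x, tvDist (K x) (K' x) ≤ 2 * γ)
    {A : Set E} (hA : MeasurableSet A) :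
    (K ∘ₘ (m + σ)).real A ≤ (K' ∘ₘ (m + σ')).real A + (β * σ.real univ + γ * m.real univ) := by
  have h := ENNReal.toReal_mono (by finiteness) (bind_add_apply_le (m := m) hσ hA
    (fun x y ↦ measure_le_add_ofReal_of_tvDist_le (hβ x y) hA)
    (fun x ↦ measure_le_add_ofReal_of_tvDist_le (hγ x) hA))
  rwa [ENNReal.toReal_add (by finiteness) (by finiteness),
    ENNReal.toReal_add (by finiteness) (by finiteness), ENNReal.toReal_mul, ENNReal.toReal_mul,
    ENNReal.toReal_ofReal hβ0, ENNReal.toReal_ofReal hγ0] at h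

theorem tvDist_bind_le {μ ν : Measure E} [IsProbabilityMeasure μ] [IsProbabilityMeasure ν]
    {K K' : Kernel E E} [IsMarkovKernel K] [IsMarkovKernel K'] {β γ : ℝ}
    (hβ : ∀ x y, tvDist (K x) (K' y) ≤ 2 * β) (hγ : ∀ x, tvDist (K x) (K' x) ≤ 2 * γ) :
    tvDist (K ∘ₘ μ) (K' ∘ₘ ν) ≤ tvDist μ ν * β + (2 - tvDist μ ν) * γ := by
  obtain ⟨x⟩ := nonempty_of_isProbabilityMeasure μ
  have hβ0 : 0 ≤ β := by linarith [tvDist_nonneg (K x) (K' x), hβ x x]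
  have hγ0 : 0 ≤ γ := by linarith [tvDist_nonneg (K x) (K' x), hγ x]
  obtain ⟨m, σ, σ', _, _, _, rfl, rfl, hσ, htv⟩ := exists_common_part μ ν
  have hmass : m.real univ = 1 - σ.real univ := by
    linarith [probReal_univ (μ := m + σ), measureReal_add_apply (μ₁ := m) (μ₂ := σ) (s := univ)]
  have hmass' : σ'.real univ = σ.real univ := by rw [measureReal_def, ← hσ, ← measureReal_def]
  refine (tvDist_le_of_forall_abs_le (c := β * σ.real univ + γ * m.real univ)
    fun A hA ↦ abs_sub_le_iff.mpr ⟨?_, ?_⟩).trans (le_of_eq ?_)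
  · linarith [measureReal_bind_add_le (m := m) hσ.le hβ0 hγ0 hβ hγ hA]
  · have h := measureReal_bind_add_le (m := m) hσ.ge hβ0 hγ0
      (fun x y ↦ (tvDist_comm _ _).trans_le (hβ y x))
      (fun x ↦ (tvDist_comm _ _).trans_le (hγ x)) hA
    rw [hmass'] at h
    linarith
  · rw [htv, hmass]
    ring

end Coupling

section Completeness

variable {E : Type*} [MeasurableSpace E]

lemma hasSum_of_tendstoUniformlyOn_measureReal {ν : ℕ → Measure E}
    [∀ n, IsFiniteMeasure (ν n)] {f : Set E → ℝ}
    (hf : TendstoUniformlyOn (fun n A ↦ (ν n).real A) f atTop {A | MeasurableSet A})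
    {g : ℕ → Set E} (hg : ∀ i, MeasurableSet (g i)) (hd : Pairwise (Disjoint on g)) :
    HasSum (fun i ↦ f (g i)) (f (⋃ i, g i)) := by
  have hlim : ∀ A, MeasurableSet A → Tendsto (fun n ↦ (ν n).real A) atTop (𝓝 (f A)) :=
    fun A hA ↦ hf.tendsto_at hA
  set B : ℕ → Set E := fun K ↦ ⋃ i ∈ Finset.range K, g i
  have hνB : ∀ n K, (ν n).real (B K) = ∑ i ∈ Finset.range K, (ν n).real (g i) := fun n K ↦
    measureReal_biUnion_finset (fun i _ j _ hij ↦ hd hij) fun i _ ↦ hg i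
  have hfB : ∀ K, f (B K) = ∑ i ∈ Finset.range K, f (g i) := fun K ↦
    tendsto_nhds_unique (hlim _ (Finset.measurableSet_biUnion _ fun i _ ↦ hg i))
      ((tendsto_finsetSum _ fun i _ ↦ hlim _ (hg i)).congr fun n ↦ (hνB n K).symm)
  have hunif : TendstoUniformly (fun n K ↦ ∑ i ∈ Finset.range K, (ν n).real (g i))
      (fun K ↦ ∑ i ∈ Finset.range K, f (g i)) atTop := by
    have h := hf.comp B
    rw [show B ⁻¹' {A | MeasurableSet A} = univ from
      eq_univ_of_forall fun K ↦ Finset.measurableSet_biUnion _ fun i _ ↦ hg i,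
      tendstoUniformlyOn_univ] at h
    simpa only [Function.comp_def, hνB, hfB] using h
  have hνsum : ∀ n, HasSum (fun i ↦ (ν n).real (g i)) ((ν n).real (⋃ i, g i)) := fun n ↦ by
    rw [measureReal_def, measure_iUnion hd hg,
      ENNReal.tsum_toReal_eq fun _ ↦ measure_ne_top _ _]
    exact ENNReal.hasSum_toReal (measure_iUnion (μ := ν n) hd hg ▸ measure_ne_top _ _)
  have hf0 : ∀ i, 0 ≤ f (g i) := fun i ↦ ge_of_tendsto' (hlim _ (hg i)) fun _ ↦ measureReal_nonneg
  rw [hasSum_iff_tendsto_nat_of_nonneg hf0]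
  -- uniform convergence in `n` lets the limits in `n` and in `K` be interchanged
  exact hunif.tendsto_of_eventually_tendsto (Eventually.of_forall fun n ↦
    (hνsum n).tendsto_sum_nat) (hlim _ (.iUnion hg))

lemma exists_isProbabilityMeasure_measureReal_eq_of_tendstoUniformlyOn {ν : ℕ → Measure E}
    [∀ n, IsProbabilityMeasure (ν n)] {f : Set E → ℝ}
    (hf : TendstoUniformlyOn (fun n A ↦ (ν n).real A) f atTop {A | MeasurableSet A}) :
    ∃ π : Measure E, IsProbabilityMeasure π ∧ ∀ A, MeasurableSet A → π.real A = f A := by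
  have hlim : ∀ A, MeasurableSet A → Tendsto (fun n ↦ (ν n).real A) atTop (𝓝 (f A)) :=
    fun A hA ↦ hf.tendsto_at hA
  have hf0 : ∀ A, MeasurableSet A → 0 ≤ f A := fun A hA ↦
    ge_of_tendsto' (hlim A hA) fun _ ↦ measureReal_nonneg
  have hempty : f ∅ = 0 := tendsto_nhds_unique (hlim ∅ .empty) (by simp)
  have huniv : f univ = 1 := tendsto_nhds_unique (hlim univ .univ) (by simp)
  refine ⟨Measure.ofMeasurable (fun A _ ↦ ENNReal.ofReal (f A)) (by simp [hempty])
    fun g hg hd ↦ ?_, ⟨?_⟩, fun A hA ↦ ?_⟩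
  · have hsum := hasSum_of_tendstoUniformlyOn_measureReal hf hg hd
    rw [← hsum.tsum_eq, ENNReal.ofReal_tsum_of_nonneg (fun i ↦ hf0 _ (hg i)) hsum.summable]
  · rw [Measure.ofMeasurable_apply _ .univ, huniv, ENNReal.ofReal_one]
  · rw [measureReal_def, Measure.ofMeasurable_apply _ hA, ENNReal.toReal_ofReal (hf0 A hA)]

theorem exists_tendsto_tvDist_of_cauchy {ν : ℕ → Measure E} [∀ n, IsProbabilityMeasure (ν n)]
    (hν : ∀ ε > 0, ∃ N, ∀ m ≥ N, ∀ n ≥ N, tvDist (ν m) (ν n) < ε) :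
    ∃ π, IsProbabilityMeasure π ∧ Tendsto (fun n ↦ tvDist (ν n) π) atTop (𝓝 0) := by
  have hcauchy : UniformCauchySeqOn (fun n A ↦ (ν n).real A) atTop {A | MeasurableSet A} :=
    Metric.uniformCauchySeqOn_iff.mpr fun ε hε ↦ by
      obtain ⟨N, hN⟩ := hν ε hε
      refine ⟨N, fun m hm n hn A hA ↦ ?_⟩
      rw [Real.dist_eq]
      linarith [abs_measureReal_sub_le_tvDist (μ := ν m) (ν := ν n) hA, hN m hm n hn,
        tvDist_nonneg (ν m) (ν n)]
  have hunif := hcauchy.tendstoUniformlyOn_of_tendsto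
    (f := fun A ↦ limUnder atTop fun n ↦ (ν n).real A)
    fun A hA ↦ (hcauchy.cauchySeq hA).tendsto_limUnder
  obtain ⟨π, hπ, hπf⟩ := exists_isProbabilityMeasure_measureReal_eq_of_tendstoUniformlyOn hunif
  refine ⟨π, hπ, Metric.tendsto_atTop.mpr fun ε hε ↦ ?_⟩
  obtain ⟨N, hN⟩ :=
    (Metric.tendstoUniformlyOn_iff.mp hunif (ε / 4) (by positivity)).exists_forall_of_atTop
  refine ⟨N, fun n hn ↦ ?_⟩
  have h := tvDist_le_of_forall_abs_le (μ := ν n) (ν := π) (c := ε / 4) fun A hA ↦ by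
    rw [hπf A hA, abs_sub_comm, ← Real.dist_eq]
    exact (hN n hn A hA).le
  rw [Real.dist_eq, sub_zero, abs_of_nonneg (tvDist_nonneg _ _)]
  linarith

end Completeness

lemma tendsto_zero_of_antitone_of_le_map {φ : ℝ → ℝ} (hφc : Continuous φ) {b : ℕ → ℝ}
    (hb : Antitone b) (hb0 : ∀ k, 0 ≤ b k) (hφ : ∀ u ∈ Ioc 0 (b 0), φ u < u)
    (hbφ : ∀ k, b (k + 1) ≤ φ (b k)) : Tendsto b atTop (𝓝 0) := by
  have hlim := tendsto_atTop_ciInf hb ⟨0, by rintro _ ⟨k, rfl⟩; exact hb0 k⟩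
  have hδ0 : 0 ≤ ⨅ k, b k := le_ciInf hb0
  have hδφ : ⨅ k, b k ≤ φ (⨅ k, b k) :=
    le_of_tendsto_of_tendsto' (hlim.comp (tendsto_add_atTop_nat 1))
      ((hφc.tendsto _).comp hlim) hbφ
  rcases hδ0.eq_or_lt with hδ | hδ
  · rwa [hδ]
  · exact absurd hδφ (not_le.mpr (hφ _ ⟨hδ, ciInf_le ⟨0, by rintro _ ⟨k, rfl⟩; exact hb0 k⟩ 0⟩))

section FixedPoint

variable {E : Type*} [MeasurableSpace E] {T : Measure E → Measure E} {φ : ℝ → ℝ}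

lemma isProbabilityMeasure_iterate
    (hT : ∀ μ, IsProbabilityMeasure μ → IsProbabilityMeasure (T μ)) (μ : Measure E)
    [IsProbabilityMeasure μ] (n : ℕ) : IsProbabilityMeasure (T^[n] μ) := by
  induction n with
  | zero => assumption
  | succ n ih => rw [Function.iterate_succ_apply']; exact hT _ ih

lemma tvDist_map_le_of_le_map (hφ : ∀ u ∈ Ioc 0 2, φ u < u)
    (hTφ : ∀ μ ν, IsProbabilityMeasure μ → IsProbabilityMeasure ν →
      tvDist (T μ) (T ν) ≤ φ (tvDist μ ν))
    {μ ν : Measure E} [IsProbabilityMeasure μ] [IsProbabilityMeasure ν] :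
    tvDist (T μ) (T ν) ≤ tvDist μ ν := by
  rcases (tvDist_nonneg μ ν).eq_or_lt with h | h
  · rw [eq_of_tvDist_le_zero h.ge, tvDist_self, tvDist_self]
  · exact (hTφ μ ν ‹_› ‹_›).trans (hφ _ ⟨h, tvDist_le_two⟩).le

lemma cauchy_iterate_of_tvDist_le_map
    (hT : ∀ μ, IsProbabilityMeasure μ → IsProbabilityMeasure (T μ)) (hφc : Continuous φ)
    (hφm : MonotoneOn φ (Icc 0 2)) (hφ : ∀ u ∈ Ioc 0 2, φ u < u)
    (hTφ : ∀ μ ν, IsProbabilityMeasure μ → IsProbabilityMeasure ν →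
      tvDist (T μ) (T ν) ≤ φ (tvDist μ ν))
    (μ : Measure E) [IsProbabilityMeasure μ] :
    ∀ ε > 0, ∃ N, ∀ m ≥ N, ∀ n ≥ N, tvDist (T^[m] μ) (T^[n] μ) < ε := by
  have := isProbabilityMeasure_iterate hT μ
  set b : ℕ → ℝ := fun k ↦ ⨆ p, tvDist (T^[k] μ) (T^[k + p] μ)
  have hbdd : ∀ k, BddAbove (range fun p ↦ tvDist (T^[k] μ) (T^[k + p] μ)) := fun k ↦
    ⟨2, by rintro _ ⟨p, rfl⟩; exact tvDist_le_two⟩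
  have hle_b : ∀ k p, tvDist (T^[k] μ) (T^[k + p] μ) ≤ b k := fun k p ↦ le_ciSup (hbdd k) p
  have hb0 : ∀ k, 0 ≤ b k := fun k ↦ Real.iSup_nonneg fun p ↦ tvDist_nonneg _ _
  have hb2 : ∀ k, b k ≤ 2 := fun k ↦ ciSup_le fun p ↦ tvDist_le_two
  have hsucc : ∀ k p, tvDist (T^[k + 1] μ) (T^[k + 1 + p] μ) =
      tvDist (T (T^[k] μ)) (T (T^[k + p] μ)) := fun k p ↦ by
    rw [Function.iterate_succ_apply', add_right_comm, Function.iterate_succ_apply']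
  have hanti : Antitone b := antitone_nat_of_succ_le fun k ↦ ciSup_le fun p ↦
    (hsucc k p).trans_le ((tvDist_map_le_of_le_map hφ hTφ).trans (hle_b k p))
  have hbφ : ∀ k, b (k + 1) ≤ φ (b k) := fun k ↦ ciSup_le fun p ↦
    (hsucc k p).trans_le ((hTφ _ _ (this k) (this (k + p))).trans
      (hφm ⟨tvDist_nonneg _ _, tvDist_le_two⟩ ⟨hb0 k, hb2 k⟩ (hle_b k p)))
  have hb := tendsto_zero_of_antitone_of_le_map hφc hanti hb0
    (fun u hu ↦ hφ u ⟨hu.1, hu.2.trans (hb2 0)⟩) hbφ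
  intro ε hε
  obtain ⟨N, hN⟩ := (hb.eventually (gt_mem_nhds hε)).exists_forall_of_atTop
  have key : ∀ m n, N ≤ m → m ≤ n → tvDist (T^[m] μ) (T^[n] μ) < ε := fun m n hm hmn ↦ by
    obtain ⟨p, rfl⟩ := Nat.exists_eq_add_of_le hmn
    exact (hle_b m p).trans_lt ((hanti hm).trans_lt (hN N le_rfl))
  refine ⟨N, fun m hm n hn ↦ ?_⟩
  rcases le_total m n with hmn | hnm
  · exact key m n hm hmn
  · rw [tvDist_comm]; exact key n m hn hnm

theorem existsUnique_isFixedPt_of_tvDist_le_map [Nonempty E]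
    (hT : ∀ μ, IsProbabilityMeasure μ → IsProbabilityMeasure (T μ)) (hφc : Continuous φ)
    (hφm : MonotoneOn φ (Icc 0 2)) (hφ : ∀ u ∈ Ioc 0 2, φ u < u)
    (hTφ : ∀ μ ν, IsProbabilityMeasure μ → IsProbabilityMeasure ν →
      tvDist (T μ) (T ν) ≤ φ (tvDist μ ν)) :
    ∃! π : Measure E, IsProbabilityMeasure π ∧ Function.IsFixedPt T π := by
  obtain ⟨x⟩ := ‹Nonempty E›
  have := isProbabilityMeasure_iterate hT (Measure.dirac x)
  obtain ⟨π, hπ, hlim⟩ := exists_tendsto_tvDist_of_cauchy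
    (cauchy_iterate_of_tvDist_le_map hT hφc hφm hφ hTφ (Measure.dirac x))
  have := hT π hπ
  have hfix : tvDist (T π) π ≤ 0 := by
    refine ge_of_tendsto' (by simpa using hlim.add (hlim.comp (tendsto_add_atTop_nat 1)))
      fun n ↦ ?_
    calc tvDist (T π) π
        ≤ tvDist (T π) (T^[n + 1] (Measure.dirac x)) + tvDist (T^[n + 1] (Measure.dirac x)) π :=
          tvDist_triangle
      _ ≤ tvDist (T^[n] (Measure.dirac x)) π + tvDist (T^[n + 1] (Measure.dirac x)) π := by
          rw [Function.iterate_succ_apply', tvDist_comm (T π)]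
          gcongr
          exact tvDist_map_le_of_le_map hφ hTφ
  refine ⟨π, ⟨hπ, eq_of_tvDist_le_zero hfix⟩, fun π' ⟨hπ', hπ'T⟩ ↦ ?_⟩
  refine eq_of_tvDist_le_zero (le_of_not_gt fun hpos ↦ ?_)
  have h := hTφ π' π hπ' hπ
  rw [hπ'T, eq_of_tvDist_le_zero hfix] at h
  exact (hφ _ ⟨hpos, tvDist_le_two⟩).not_ge h

theorem existsUnique_isFixedPt_of_tvDist_le_quadratic [Nonempty E]
    (hT : ∀ μ, IsProbabilityMeasure μ → IsProbabilityMeasure (T μ)) {α lam : ℝ} (hα0 : 0 < α)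
    (hα1 : α ≤ 1) (hlam0 : 0 ≤ lam) (hlamα : lam ≤ α)
    (hTd : ∀ μ ν, IsProbabilityMeasure μ → IsProbabilityMeasure ν →
      tvDist (T μ) (T ν) ≤ tvDist μ ν * (1 - α) + (2 - tvDist μ ν) * (lam * tvDist μ ν / 2)) :
    ∃! π : Measure E, IsProbabilityMeasure π ∧ Function.IsFixedPt T π := by
  -- Averaging the quadratic bound with the identity makes it monotone on `[0, 2]`.
  refine existsUnique_isFixedPt_of_tvDist_le_map hT
    (φ := fun u ↦ (u + (u * (1 - α) + (2 - u) * (lam * u / 2))) / 2) (by fun_prop) ?_ ?_ ?_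
  · intro u ⟨hu0, _⟩ v ⟨_, hv2⟩ huv
    nlinarith [mul_nonneg (sub_nonneg.mpr huv) hlam0, mul_nonneg (sub_nonneg.mpr huv) hu0,
      mul_nonneg (mul_nonneg (sub_nonneg.mpr huv) hlam0) (sub_nonneg.mpr hv2)]
  · intro u ⟨hu0, _⟩
    nlinarith [mul_pos hα0 hu0, mul_nonneg (sub_nonneg.mpr hlamα) hu0.le,
      mul_nonneg hlam0 (mul_nonneg hu0.le hu0.le)]
  · intro μ ν hμ hν
    have h0 := tvDist_nonneg μ ν
    nlinarith [hTd μ ν hμ hν, mul_nonneg (sub_nonneg.mpr hlamα) h0,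
      mul_nonneg hlam0 (mul_nonneg h0 h0)]

end FixedPoint

section NonlinearChain

variable {E : Type*} [MeasurableSpace E] {P : Measure E → Kernel E E}

lemma isProbabilityMeasure_stepMeasure (hP : ∀ μ, IsMarkovKernel (P μ)) (μ : Measure E)
    [IsProbabilityMeasure μ] : IsProbabilityMeasure (stepMeasure P μ) :=
  have := hP μ
  inferInstanceAs (IsProbabilityMeasure (P μ ∘ₘ μ))

lemma isProbabilityMeasure_marginal (hP : ∀ μ, IsMarkovKernel (P μ)) (μ₀ : Measure E)
    [IsProbabilityMeasure μ₀] (n : ℕ) : IsProbabilityMeasure (marginal P μ₀ n) := by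
  induction n with
  | zero => assumption
  | succ n ih => exact isProbabilityMeasure_stepMeasure hP _

lemma stepMeasure_stepMeasure (P : Measure E → Kernel E E) (μ : Measure E) :
    stepMeasure P (stepMeasure P μ) = (P (stepMeasure P μ) ∘ₖ P μ) ∘ₘ μ :=
  Measure.comp_assoc

lemma twoStepKernel_eq_comp_apply (P : Measure E → Kernel E E) (μ : Measure E) (x : E) :
    twoStepKernel P μ x = (P (stepMeasure P μ) ∘ₖ P μ) x :=
  (Kernel.comp_apply _ _ x).symm

lemma tvDist_stepMeasure_le (hP : ∀ μ, IsMarkovKernel (P μ)) {μ ν : Measure E}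
    [IsProbabilityMeasure μ] [IsProbabilityMeasure ν] {lam : ℝ} (hlam : 0 ≤ lam)
    (hP_lip : ∀ x, tvDist (P μ x) (P ν x) ≤ lam * tvDist μ ν) :
    tvDist (stepMeasure P μ) (stepMeasure P ν) ≤ (1 + lam) * tvDist μ ν := by
  have := hP μ
  have := hP ν
  have h0 := tvDist_nonneg μ ν
  have h : tvDist (stepMeasure P μ) (stepMeasure P ν) ≤
      tvDist μ ν * 1 + (2 - tvDist μ ν) * (lam * tvDist μ ν / 2) :=
    tvDist_bind_le (fun x y ↦ by linarith [tvDist_le_two (μ := P μ x) (ν := P ν y)])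
    (fun x ↦ by linarith [hP_lip x])
  nlinarith [mul_nonneg (mul_nonneg hlam h0) h0]

lemma tvDist_stepMeasure_stepMeasure_le (hP : ∀ μ, IsMarkovKernel (P μ)) {μ ν : Measure E}
    [IsProbabilityMeasure μ] [IsProbabilityMeasure ν] {α lam : ℝ}
    (hQ_cross : ∀ x y, tvDist (twoStepKernel P μ x) (twoStepKernel P ν y) ≤ 2 * (1 - α))
    (hQ_lip : ∀ x, tvDist (twoStepKernel P μ x) (twoStepKernel P ν x) ≤ lam * tvDist μ ν) :
    tvDist (stepMeasure P (stepMeasure P μ)) (stepMeasure P (stepMeasure P ν)) ≤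
      tvDist μ ν * (1 - α) + (2 - tvDist μ ν) * (lam * tvDist μ ν / 2) := by
  have := hP μ
  have := hP ν
  have := hP (stepMeasure P μ)
  have := hP (stepMeasure P ν)
  simp only [twoStepKernel_eq_comp_apply] at hQ_cross hQ_lip
  rw [stepMeasure_stepMeasure, stepMeasure_stepMeasure]
  exact tvDist_bind_le hQ_cross fun x ↦ by linarith [hQ_lip x]

lemma tvDist_marginal_le (hP : ∀ μ, IsMarkovKernel (P μ)) {π : Measure E} {r c : ℝ}
    (hr : 0 ≤ r) (hc : 0 ≤ c)
    (h₂ : ∀ μ, IsProbabilityMeasure μ →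
      tvDist (stepMeasure P (stepMeasure P μ)) π ≤ r * tvDist μ π)
    (h₁ : ∀ μ, IsProbabilityMeasure μ → tvDist (stepMeasure P μ) π ≤ c * tvDist μ π)
    (μ₀ : Measure E) [IsProbabilityMeasure μ₀] (n : ℕ) :
    tvDist (marginal P μ₀ n) π ≤ tvDist μ₀ π * r ^ (n / 2) * if Odd n then c else 1 := by
  have heven : ∀ k, tvDist (marginal P μ₀ (2 * k)) π ≤ tvDist μ₀ π * r ^ k := by
    intro k
    induction k with
    | zero => simp [marginal]
    | succ k ih =>
      calc tvDist (marginal P μ₀ (2 * (k + 1))) π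
          = tvDist (stepMeasure P (stepMeasure P (marginal P μ₀ (2 * k)))) π := rfl
        _ ≤ r * tvDist (marginal P μ₀ (2 * k)) π := h₂ _ (isProbabilityMeasure_marginal hP μ₀ _)
        _ ≤ r * (tvDist μ₀ π * r ^ k) := by gcongr
        _ = tvDist μ₀ π * r ^ (k + 1) := by ring
  obtain ⟨k, rfl | rfl⟩ := Nat.even_or_odd' n
  · simpa [Nat.not_odd_iff_even.mpr (even_two_mul k)] using heven k
  · rw [if_pos (odd_two_mul_add_one k), show (2 * k + 1) / 2 = k by omega]
    calc tvDist (marginal P μ₀ (2 * k + 1)) π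
        ≤ c * tvDist (marginal P μ₀ (2 * k)) π := h₁ _ (isProbabilityMeasure_marginal hP μ₀ _)
      _ ≤ c * (tvDist μ₀ π * r ^ k) := by gcongr; exact heven k
      _ = tvDist μ₀ π * r ^ k * c := by ring

end NonlinearChain

/-- under conditions (C1), (C2), (C3) there is a unique invariant measure `π`
and `‖μ_n − π‖_TV ≤ ‖μ₀ − π‖_TV (1 − α₂ + λ₂)^{⌊n/2⌋} c_n`. -/
theorem nonlinear_chain_unique_invariant_and_convergence
    {E : Type*} [MeasurableSpace E] [Nonempty E]
    (P : Measure E → Kernel E E) (hP : ∀ μ, IsMarkovKernel (P μ))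
    (α₂ lam₁ lam₂ : ℝ) (hα₂0 : 0 < α₂) (hα₂1 : α₂ < 1)
    (hlam₂0 : 0 ≤ lam₂) (hlam₂α : lam₂ ≤ α₂) (hlam₁0 : 0 ≤ lam₁)
    (C1 : ∀ (μ ν : Measure E), IsProbabilityMeasure μ → IsProbabilityMeasure ν →
      ∀ x y : E, tvDist (twoStepKernel P μ x) (twoStepKernel P ν y) ≤ 2 * (1 - α₂))
    (C2 : ∀ (μ ν : Measure E), IsProbabilityMeasure μ → IsProbabilityMeasure ν →
      ∀ x : E, tvDist (twoStepKernel P μ x) (twoStepKernel P ν x) ≤ lam₂ * tvDist μ ν)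
    (C3 : ∀ (μ ν : Measure E), IsProbabilityMeasure μ → IsProbabilityMeasure ν →
      ∀ x : E, tvDist (P μ x) (P ν x) ≤ lam₁ * tvDist μ ν) :
    ∃ π : Measure E, IsProbabilityMeasure π ∧ stepMeasure P π = π ∧
      (∀ π' : Measure E, IsProbabilityMeasure π' → stepMeasure P π' = π' → π' = π) ∧
      (∀ μ0 : Measure E, IsProbabilityMeasure μ0 → ∀ n : ℕ,
        tvDist (marginal P μ0 n) π ≤
          tvDist μ0 π * (1 - α₂ + lam₂) ^ (n / 2) *
            (if Odd n then 1 + lam₁ else 1)) := by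
  have hS : ∀ μ, IsProbabilityMeasure μ → IsProbabilityMeasure (stepMeasure P μ) :=
    fun μ _ ↦ isProbabilityMeasure_stepMeasure hP μ
  have hSS : ∀ μ ν, IsProbabilityMeasure μ → IsProbabilityMeasure ν →
      tvDist (stepMeasure P (stepMeasure P μ)) (stepMeasure P (stepMeasure P ν)) ≤
        tvDist μ ν * (1 - α₂) + (2 - tvDist μ ν) * (lam₂ * tvDist μ ν / 2) :=
    fun μ ν hμ hν ↦ tvDist_stepMeasure_stepMeasure_le hP (C1 μ ν hμ hν) (C2 μ ν hμ hν)
  obtain ⟨π, ⟨hπ, hπT⟩, huniq⟩ := existsUnique_isFixedPt_of_tvDist_le_quadratic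
    (T := stepMeasure P ∘ stepMeasure P) (fun μ hμ ↦ hS _ (hS μ hμ)) hα₂0 hα₂1.le hlam₂0 hlam₂α hSS
  have hSπ : stepMeasure P π = π := huniq _ ⟨hS π hπ, congrArg (stepMeasure P) hπT⟩
  refine ⟨π, hπ, hSπ, fun π' hπ' hSπ' ↦ huniq π' ⟨hπ', by simp [Function.IsFixedPt, hSπ']⟩,
    fun μ₀ hμ₀ n ↦ tvDist_marginal_le hP (by linarith) (by linarith) (fun μ hμ ↦ ?_)
      (fun μ hμ ↦ ?_) μ₀ n⟩
  · have h := hSS μ π hμ hπ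
    rw [hSπ, hSπ] at h
    nlinarith [mul_nonneg (mul_nonneg hlam₂0 (tvDist_nonneg μ π)) (tvDist_nonneg μ π)]
  · simpa only [hSπ] using tvDist_stepMeasure_le hP hlam₁0 (C3 μ π hμ hπ)
end

section
/- Let (a_n)_{n∈ℤ₊} be a sequence of positive real numbers with 0 < a₀ ≤ 1, and let ψ : [0,∞) → [0,1] be a continuous non-decreasing function with ψ(0) = 0 and ψ(x) > 0 for x > 0. Suppose a_{n+1} ≤ a_n(1 − ψ(a_n)) for all n ∈ ℤ₊. Define g(x) = ∫_x^{a₀} dt/(t ψ(t)) for 0 < x ≤ 1. Then a_n ≤ g⁻¹(n) for all n ∈ ℤ₊, where g⁻¹ is the inverse function of g. -/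
open MeasureTheory intervalIntegral

/-- comparison lemma: if `a_{n+1} ≤ a_n (1 − ψ(a_n))` with `0 < a₀ ≤ 1` and
`ψ : [0,∞) → [0,1]` continuous, non-decreasing, `ψ(0) = 0`, `ψ > 0` on `(0,∞)`, then
`a_n ≤ g⁻¹(n)` where `g(x) = ∫_x^{a₀} dt/(t ψ(t))`; equivalently, whenever `y ∈ (0, a₀]`
satisfies `g(y) = n` (i.e. `y = g⁻¹(n)`), one has `a_n ≤ y`. -/
theorem comparison_lemma (a : ℕ → ℝ) (ha_pos : ∀ n, 0 < a n) (ha0 : a 0 ≤ 1)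
    (ψ : ℝ → ℝ) (hψ_range : ∀ x, 0 ≤ x → ψ x ∈ Set.Icc (0 : ℝ) 1)
    (hψ_cont : ContinuousOn ψ (Set.Ici 0)) (hψ_mono : MonotoneOn ψ (Set.Ici 0))
    (hψ0 : ψ 0 = 0) (hψ_pos : ∀ x, 0 < x → 0 < ψ x)
    (hrec : ∀ n, a (n + 1) ≤ a n * (1 - ψ (a n))) :
    ∀ n : ℕ, ∀ y : ℝ, 0 < y → y ≤ a 0 →
      (∫ t in y..(a 0), 1 / (t * ψ t)) = (n : ℝ) → a n ≤ y := by
  set f : ℝ → ℝ := fun t => 1 / (t * ψ t) with hf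
  have hcont : ∀ u v : ℝ, 0 < u → ContinuousOn f (Set.Icc u v) := by
    intro u v hu
    have hsub : Set.Icc u v ⊆ Set.Ici (0 : ℝ) := fun t ht => le_trans hu.le ht.1
    apply ContinuousOn.div continuousOn_const
    · exact continuousOn_id.mul (hψ_cont.mono hsub)
    · intro t ht
      have ht0 : 0 < t := lt_of_lt_of_le hu ht.1
      exact (mul_pos ht0 (hψ_pos t ht0)).ne'
  have hint : ∀ u v : ℝ, 0 < u → u ≤ v → IntervalIntegrable f volume u v := by
    intro u v hu huv
    exact (hcont u v hu).intervalIntegrable_of_Icc huv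
  have hkey : ∀ u v : ℝ, 0 < u → u ≤ v → (v - u) / (v * ψ v) ≤ ∫ t in u..v, f t := by
    intro u v hu huv
    have hv : 0 < v := lt_of_lt_of_le hu huv
    have hvψ : 0 < v * ψ v := mul_pos hv (hψ_pos v hv)
    have hc : (∫ _t in u..v, (1 / (v * ψ v) : ℝ)) = (v - u) * (1 / (v * ψ v)) := by
      rw [intervalIntegral.integral_const, smul_eq_mul]
    calc (v - u) / (v * ψ v) = ∫ _t in u..v, (1 / (v * ψ v) : ℝ) := by
          rw [hc]; ring
      _ ≤ ∫ t in u..v, f t := by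
          apply intervalIntegral.integral_mono_on huv intervalIntegrable_const
            (hint u v hu huv)
          intro t ht
          have ht0 : 0 < t := lt_of_lt_of_le hu ht.1
          have hψt : 0 < ψ t := hψ_pos t ht0
          have hle : t * ψ t ≤ v * ψ v :=
            mul_le_mul ht.2 (hψ_mono ht0.le hv.le ht.2) hψt.le hv.le
          exact one_div_le_one_div_of_le (mul_pos ht0 hψt) hle
  have hdec : ∀ n, a (n + 1) ≤ a n := by
    intro n
    have h1 : 0 ≤ ψ (a n) := (hψ_range (a n) (ha_pos n).le).1
    nlinarith [hrec n, ha_pos n]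
  have hle0 : ∀ n, a n ≤ a 0 := by
    intro n
    induction n with
    | zero => exact le_rfl
    | succ k ih => exact le_trans (hdec k) ih
  have hlow : ∀ n : ℕ, (n : ℝ) ≤ ∫ t in (a n)..(a 0), f t := by
    intro n
    induction n with
    | zero => simp
    | succ k ih =>
      have hsplit : (∫ t in (a (k+1))..(a k), f t) + (∫ t in (a k)..(a 0), f t)
          = ∫ t in (a (k+1))..(a 0), f t :=
        intervalIntegral.integral_add_adjacent_intervals
          (hint _ _ (ha_pos (k+1)) (hdec k)) (hint _ _ (ha_pos k) (hle0 k))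
      have hψk : 0 < ψ (a k) := hψ_pos _ (ha_pos k)
      have hgap : a k * ψ (a k) ≤ a k - a (k + 1) := by nlinarith [hrec k]
      have h1 : (1 : ℝ) ≤ ∫ t in (a (k+1))..(a k), f t := by
        refine le_trans ?_ (hkey _ _ (ha_pos (k+1)) (hdec k))
        rw [le_div_iff₀ (mul_pos (ha_pos k) hψk)]
        linarith
      push_cast
      linarith
  intro n y hy hya hgy
  by_contra hcon
  push_neg at hcon
  have hsplit : (∫ t in y..(a n), f t) + (∫ t in (a n)..(a 0), f t)
      = ∫ t in y..(a 0), f t :=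
    intervalIntegral.integral_add_adjacent_intervals
      (hint _ _ hy hcon.le) (hint _ _ (ha_pos n) (hle0 n))
  have hψn : 0 < ψ (a n) := hψ_pos _ (ha_pos n)
  have hpos : 0 < ∫ t in y..(a n), f t := by
    refine lt_of_lt_of_le ?_ (hkey _ _ hy hcon.le)
    exact div_pos (sub_pos.mpr hcon) (mul_pos (ha_pos n) hψn)
  have := hlow n
  rw [hf] at hsplit
  simp only [hf] at hgy ⊢
  linarith [hsplit.symm ▸ hgy]
end
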